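/- arXiv:2506.16480 — 7 statements merged into one kernel-verified Lean document; each statement's English description precedes it below -/
import Mathlib

section
/- Let n ≥ 1, let W be a density matrix on ℂ^n, and let A, B be Hermitian n×n complex matrices. Then the indeterminacy (Robertson–Schrödinger) inequality holds: σ_A² · σ_B² ≥ c_{A,B}² + (1/4)·‖tr(W(AB − BA))‖², where ‖·‖ denotes the complex absolute value. -/
open Matrix
open scoped ComplexOrder

/-- Expectation value of the observable `A` in the state `W`. -/
noncomputable def expVal {n : ℕ} (W A : Matrix (Fin n) (Fin n) ℂ) : ℝ :=
  ((W * A).trace).re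

/-- Variance of the observable `A` in the state `W`. -/
noncomputable def matVar {n : ℕ} (W A : Matrix (Fin n) (Fin n) ℂ) : ℝ :=
  ((W * (A - (expVal W A : ℂ) • 1) ^ 2).trace).re

/-- Covariance of the observables `A`, `B` in the state `W`. -/
noncomputable def matCov {n : ℕ} (W A B : Matrix (Fin n) (Fin n) ℂ) : ℝ :=
  (1 / 2) * ((W * (A * B + B * A)).trace).re - expVal W A * expVal W B

/-! With `A₀ = A - ⟨A⟩`, `B₀ = B - ⟨B⟩` and `z = tr (W A₀ B₀)`, the covariance is `Re z`; as
`A₀, B₀` have the same commutator as `A, B` and `tr (W B₀ A₀) = conj z`, the commutator term is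
`2 |Im z|`. So the right-hand side is `|z|²`, which Cauchy–Schwarz for the semi-inner product
`⟪X, Y⟫ = tr (W Xᴴ Y)` induced by `W` bounds by `σ_A² σ_B²`. -/

namespace Matrix

theorem PosSemidef.norm_trace_mul_conjTranspose_mul_sq_le {𝕜 n : Type*} [RCLike 𝕜] [Fintype n]
    {W : Matrix n n 𝕜} (hW : W.PosSemidef) (P Q : Matrix n n 𝕜) :
    ‖(W * (Pᴴ * Q)).trace‖ ^ 2 ≤
      RCLike.re (W * (Pᴴ * P)).trace * RCLike.re (W * (Qᴴ * Q)).trace := by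
  let := W.toMatrixSeminormedAddCommGroup hW
  let := W.toMatrixInnerProductSpace hW
  have trace_eq_inner (X Y : Matrix n n 𝕜) : (W * (Xᴴ * Y)).trace = inner 𝕜 X Y := by
    change _ = (Y * W * Xᴴ).trace
    rw [trace_mul_cycle, trace_mul_comm, mul_assoc]
  simp only [trace_eq_inner, sq]
  simpa only [← norm_inner_symm P Q] using inner_mul_inner_self_le P Q

theorem star_trace_mul_mul {R n : Type*} [CommRing R] [StarRing R] [Fintype n]
    {W P Q : Matrix n n R} (hW : W.IsHermitian) (hP : P.IsHermitian) (hQ : Q.IsHermitian) :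
    star (W * (P * Q)).trace = (W * (Q * P)).trace := by
  rw [← trace_conjTranspose, conjTranspose_mul, conjTranspose_mul, hW.eq, hP.eq, hQ.eq,
    trace_mul_comm]

theorem sub_smul_one_mul_sub_smul_one_sub {R n : Type*} [CommRing R] [Fintype n] [DecidableEq n]
    (A B : Matrix n n R) (a b : R) :
    (A - a • 1) * (B - b • 1) - (B - b • 1) * (A - a • 1) = A * B - B * A := by
  simp only [sub_mul, mul_sub, smul_mul_assoc, mul_smul_comm, one_mul, mul_one]
  module

section Complex

variable {n : Type*} [Fintype n] {W P Q : Matrix n n ℂ}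

theorem re_trace_mul_add_mul (hW : W.IsHermitian) (hP : P.IsHermitian) (hQ : Q.IsHermitian) :
    (W * (P * Q + Q * P)).trace.re = 2 * (W * (P * Q)).trace.re := by
  rw [mul_add, trace_add, ← star_trace_mul_mul hW hP hQ, Complex.star_def, Complex.add_conj,
    Complex.ofReal_re]

theorem norm_trace_mul_sub_mul (hW : W.IsHermitian) (hP : P.IsHermitian) (hQ : Q.IsHermitian) :
    ‖(W * (P * Q - Q * P)).trace‖ = 2 * |(W * (P * Q)).trace.im| := by
  rw [mul_sub, trace_sub, ← star_trace_mul_mul hW hP hQ, Complex.star_def, Complex.sub_conj,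
    norm_mul, Complex.norm_I, mul_one, Complex.norm_real, Real.norm_eq_abs, abs_mul, abs_two]

end Complex

end Matrix

section Observables

variable {n : ℕ} {W A B : Matrix (Fin n) (Fin n) ℂ}

noncomputable def centered (W A : Matrix (Fin n) (Fin n) ℂ) : Matrix (Fin n) (Fin n) ℂ :=
  A - (expVal W A : ℂ) • 1

theorem isHermitian_centered (hA : A.IsHermitian) : (centered W A).IsHermitian :=
  hA.sub (by simp [IsHermitian, conjTranspose_smul])

theorem matVar_eq_re_trace_mul_centered_mul_self :
    matVar W A = (W * (centered W A * centered W A)).trace.re := by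
  rw [matVar, sq, centered]

theorem trace_mul_eq_expVal (hW : W.IsHermitian) (hA : A.IsHermitian) :
    (W * A).trace = expVal W A := by
  have : star (W * A).trace = (W * A).trace := by
    rw [← trace_conjTranspose, conjTranspose_mul, hW.eq, hA.eq, trace_mul_comm]
  exact (Complex.conj_eq_iff_re.mp this).symm

theorem trace_mul_centered_mul_centered (hW : W.IsHermitian) (htr : W.trace = 1)
    (hA : A.IsHermitian) (hB : B.IsHermitian) :
    (W * (centered W A * centered W B)).trace =
      (W * (A * B)).trace - expVal W A * expVal W B := by
  simp only [centered, sub_mul, mul_sub, smul_mul_assoc, mul_smul_comm, one_mul, mul_one,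
    trace_sub, trace_smul, trace_mul_eq_expVal hW hA, trace_mul_eq_expVal hW hB,
    htr, smul_eq_mul]
  ring

theorem matCov_eq_re_trace_mul_centered_mul_centered (hW : W.IsHermitian) (htr : W.trace = 1)
    (hA : A.IsHermitian) (hB : B.IsHermitian) :
    matCov W A B = (W * (centered W A * centered W B)).trace.re := by
  rw [matCov, re_trace_mul_add_mul hW hA hB, trace_mul_centered_mul_centered hW htr hA hB,
    ← Complex.ofReal_mul, Complex.sub_re, Complex.ofReal_re]
  ring

theorem centered_commutator :
    centered W A * centered W B - centered W B * centered W A = A * B - B * A :=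
  sub_smul_one_mul_sub_smul_one_sub A B _ _

end Observables

theorem indeterminacy_inequality_general {n : ℕ}
    (W A B : Matrix (Fin n) (Fin n) ℂ)
    (hW : W.PosSemidef) (htr : W.trace = 1)
    (hA : A.IsHermitian) (hB : B.IsHermitian) :
    matVar W A * matVar W B ≥
      matCov W A B ^ 2 + (1 / 4) * ‖(W * (A * B - B * A)).trace‖ ^ 2 := by
  have hA' := isHermitian_centered (W := W) hA
  have hB' := isHermitian_centered (W := W) hB
  set z := (W * (centered W A * centered W B)).trace
  have hcov : matCov W A B = z.re :=
    matCov_eq_re_trace_mul_centered_mul_centered hW.1 htr hA hB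
  have hcomm : ‖(W * (A * B - B * A)).trace‖ = 2 * |z.im| := by
    rw [← centered_commutator, norm_trace_mul_sub_mul hW.1 hA' hB']
  have hCS : ‖z‖ ^ 2 ≤ matVar W A * matVar W B := by
    have h := hW.norm_trace_mul_conjTranspose_mul_sq_le (centered W A) (centered W B)
    rwa [hA'.eq, hB'.eq, RCLike.re_to_complex, RCLike.re_to_complex,
      ← matVar_eq_re_trace_mul_centered_mul_self, ← matVar_eq_re_trace_mul_centered_mul_self] at h
  calc matCov W A B ^ 2 + (1 / 4) * ‖(W * (A * B - B * A)).trace‖ ^ 2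
      = ‖z‖ ^ 2 := by
        rw [hcov, hcomm, Complex.sq_norm, Complex.normSq_apply, mul_pow, sq_abs]; ring
    _ ≤ matVar W A * matVar W B := hCS

/-- Robertson–Schrödinger indeterminacy inequality. -/
theorem indeterminacy_inequality {n : ℕ} (hn : 1 ≤ n)
    (W A B : Matrix (Fin n) (Fin n) ℂ)
    (hW : W.PosSemidef) (htr : W.trace = 1)
    (hA : A.IsHermitian) (hB : B.IsHermitian) :
    matVar W A * matVar W B ≥
      matCov W A B ^ 2 + (1 / 4) * ‖(W * (A * B - B * A)).trace‖ ^ 2 :=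
  indeterminacy_inequality_general W A B hW htr hA hB
end

section
/- Let n ≥ 1, let W be a density matrix on ℂ^n, let A, B be Hermitian n×n complex matrices with σ_A > 0 and σ_B > 0, and let κ_{A,B} := c_{A,B}/(σ_A·σ_B) be the correlation coefficient, where σ_A := √(σ_A²) and σ_B := √(σ_B²). Then for each sign s ∈ {+1, −1}: κ_{A,B} = s if and only if there exist λ > 0 and μ ∈ ℝ such that (A − s·λ·B)·W = μ·W, i.e. W is an eigenstate of A − s·λ·B. -/
open Matrix
open scoped ComplexOrder

/-! Variance is a positive semidefinite quadratic form: `Var(A - tB) = Var A - 2t c + t² Var B ≥ 0`,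
whence Cauchy–Schwarz `|c| ≤ σ_A σ_B`. Writing `D = C - ⟨C⟩`, `Var C = tr(D W D)`, and factoring
`W = R⋆R` shows that this vanishes exactly when `D W = 0`, i.e. when `W` is an eigenstate of `C`.
For `s = ±1`, `Var(A - sλB) = (σ_A - λσ_B)² + 2λ(σ_A σ_B - s c)` is a sum of two nonnegative
terms, so `W` is an eigenstate of `A - sλB` for some `λ > 0` iff `λ = σ_A/σ_B` and
`c = s σ_A σ_B`. -/

namespace Matrix

variable {ι 𝕜 : Type*} [Fintype ι] [DecidableEq ι] [RCLike 𝕜]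

theorem trace_mul_sq_eq_trace_mul_mul (W D : Matrix ι ι 𝕜) :
    (W * D ^ 2).trace = (D * W * D).trace := by
  rw [sq, trace_mul_comm, Matrix.mul_assoc, trace_mul_comm]

theorem PosSemidef.trace_mul_sq_nonneg {W D : Matrix ι ι 𝕜} (hW : W.PosSemidef)
    (hD : D.IsHermitian) : 0 ≤ (W * D ^ 2).trace := by
  have := (hW.mul_mul_conjTranspose_same D).trace_nonneg
  rwa [hD.eq, ← trace_mul_sq_eq_trace_mul_mul] at this

open scoped MatrixOrder in
theorem PosSemidef.mul_eq_zero_of_trace_mul_sq_eq_zero {W D : Matrix ι ι 𝕜} (hW : W.PosSemidef)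
    (hD : D.IsHermitian) (h : (W * D ^ 2).trace = 0) : D * W = 0 := by
  obtain ⟨R, rfl⟩ := CStarAlgebra.nonneg_iff_eq_star_mul_self.mp hW.nonneg
  have hDR : D * star R = 0 := by
    rw [← trace_mul_conjTranspose_self_eq_zero_iff, ← h, trace_mul_sq_eq_trace_mul_mul]
    simp only [conjTranspose_mul, star_eq_conjTranspose, conjTranspose_conjTranspose, hD.eq,
      Matrix.mul_assoc]
  rw [← Matrix.mul_assoc, hDR, Matrix.zero_mul]

end Matrix

section

variable {n : ℕ} {W A B C : Matrix (Fin n) (Fin n) ℂ}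

theorem isHermitian_sub_ofReal_smul (hA : A.IsHermitian) (hB : B.IsHermitian) (t : ℝ) :
    (A - (t : ℂ) • B).IsHermitian := by
  simp [IsHermitian, conjTranspose_sub, hA.eq, hB.eq]

theorem isHermitian_sub_ofReal_smul_one (hC : C.IsHermitian) (x : ℝ) :
    (C - (x : ℂ) • 1).IsHermitian :=
  isHermitian_sub_ofReal_smul hC isHermitian_one x

theorem matVar_nonneg (hW : W.PosSemidef) (hC : C.IsHermitian) : 0 ≤ matVar W C :=
  (Complex.nonneg_iff.mp (hW.trace_mul_sq_nonneg (isHermitian_sub_ofReal_smul_one hC _))).1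

theorem expVal_eq_of_mul_eq_smul (htr : W.trace = 1) {μ : ℝ} (h : C * W = (μ : ℂ) • W) :
    expVal W C = μ := by
  rw [expVal, trace_mul_comm, h, trace_smul, htr, smul_eq_mul, mul_one, Complex.ofReal_re]

theorem matVar_eq_zero_iff (hW : W.PosSemidef) (htr : W.trace = 1) (hC : C.IsHermitian) :
    matVar W C = 0 ↔ ∃ μ : ℝ, C * W = (μ : ℂ) • W := by
  constructor
  · intro h
    set D := C - (expVal W C : ℂ) • 1
    have hD : D.IsHermitian := isHermitian_sub_ofReal_smul_one hC _
    have htrace : (W * D ^ 2).trace = 0 :=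
      Complex.ext h (Complex.nonneg_iff.mp (hW.trace_mul_sq_nonneg hD)).2.symm
    refine ⟨expVal W C, ?_⟩
    have := hW.mul_eq_zero_of_trace_mul_sq_eq_zero hD htrace
    rwa [Matrix.sub_mul, Matrix.smul_mul, Matrix.one_mul, sub_eq_zero] at this
  · rintro ⟨μ, h⟩
    have hDW : (C - (μ : ℂ) • 1) * W = 0 := by
      rw [Matrix.sub_mul, h, Matrix.smul_mul, Matrix.one_mul, sub_self]
    rw [matVar, expVal_eq_of_mul_eq_smul htr h, trace_mul_sq_eq_trace_mul_mul, hDW,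
      Matrix.zero_mul, trace_zero, Complex.zero_re]

theorem expVal_sub_smul (t : ℝ) :
    expVal W (A - (t : ℂ) • B) = expVal W A - t * expVal W B := by
  simp [expVal, Matrix.mul_sub, trace_sub]

theorem matVar_sub_smul (htr : W.trace = 1) (t : ℝ) :
    matVar W (A - (t : ℂ) • B) = matVar W A - 2 * t * matCov W A B + t ^ 2 * matVar W B := by
  simp only [matVar, matCov, expVal_sub_smul]
  have ha : (W * A).trace.re = expVal W A := rfl
  have hb : (W * B).trace.re = expVal W B := rfl
  simp only [sq, Matrix.sub_mul, Matrix.mul_sub, Matrix.smul_mul, Matrix.mul_smul, Matrix.one_mul,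
    Matrix.mul_add, trace_sub, trace_add, trace_smul, htr, smul_eq_mul, Complex.sub_re,
    Complex.add_re, Complex.re_ofReal_mul, mul_one, Complex.ofReal_re, ha, hb]
  ring

theorem abs_matCov_le (hW : W.PosSemidef) (htr : W.trace = 1) (hA : A.IsHermitian)
    (hB : B.IsHermitian) :
    |matCov W A B| ≤ Real.sqrt (matVar W A) * Real.sqrt (matVar W B) := by
  have hdiscr := discrim_le_zero (a := matVar W B) (b := -2 * matCov W A B) (c := matVar W A)
    fun t => by
      have := matVar_nonneg hW (isHermitian_sub_ofReal_smul hA hB t)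
      rw [matVar_sub_smul htr] at this
      linarith
  rw [← Real.sqrt_mul (matVar_nonneg hW hA)]
  apply Real.abs_le_sqrt
  rw [discrim] at hdiscr
  linarith

end

theorem correlation_extreme_iff_eigenstate_general {n : ℕ}
    (W A B : Matrix (Fin n) (Fin n) ℂ)
    (hW : W.PosSemidef) (htr : W.trace = 1)
    (hA : A.IsHermitian) (hB : B.IsHermitian)
    (hσA : 0 < Real.sqrt (matVar W A)) (hσB : 0 < Real.sqrt (matVar W B))
    (s : ℝ) (hs : s = 1 ∨ s = -1) :
    matCov W A B / (Real.sqrt (matVar W A) * Real.sqrt (matVar W B)) = s ↔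
      ∃ lam : ℝ, 0 < lam ∧ ∃ μ : ℝ,
        (A - ((s * lam : ℝ) : ℂ) • B) * W = (μ : ℂ) • W := by
  set σA := Real.sqrt (matVar W A)
  set σB := Real.sqrt (matVar W B)
  set c := matCov W A B
  have hs2 : s ^ 2 = 1 := by rcases hs with rfl | rfl <;> norm_num
  have hcs : s * c ≤ σA * σB := by
    have := abs_matCov_le hW htr hA hB
    rcases hs with rfl | rfl
    · linarith [le_abs_self c]
    · linarith [neg_abs_le c]
  have hsplit (lam : ℝ) : matVar W (A - ((s * lam : ℝ) : ℂ) • B) =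
      (σA - lam * σB) ^ 2 + 2 * lam * (σA * σB - s * c) := by
    rw [matVar_sub_smul htr, ← Real.sq_sqrt (matVar_nonneg hW hA),
      ← Real.sq_sqrt (matVar_nonneg hW hB)]
    linear_combination (lam ^ 2 * σB ^ 2) * hs2
  have heigen (lam : ℝ) : (∃ μ : ℝ, (A - ((s * lam : ℝ) : ℂ) • B) * W = (μ : ℂ) • W) ↔
      (σA - lam * σB) ^ 2 + 2 * lam * (σA * σB - s * c) = 0 := by
    rw [← hsplit, matVar_eq_zero_iff hW htr (isHermitian_sub_ofReal_smul hA hB _)]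
  simp_rw [heigen, div_eq_iff (mul_pos hσA hσB).ne']
  constructor
  · intro hc
    refine ⟨σA / σB, div_pos hσA hσB, ?_⟩
    rw [div_mul_cancel₀ _ hσB.ne', hc]
    linear_combination (-2 * (σA / σB) * σA * σB) * hs2
  · rintro ⟨lam, hlam, hzero⟩
    have hsc : s * c = σA * σB := by
      nlinarith [sq_nonneg (σA - lam * σB), mul_nonneg hlam.le (sub_nonneg.mpr hcs)]
    linear_combination s * hsc - c * hs2

/-- Perfect (anti)correlation: the correlation coefficient equals `s = ±1` iff
`W` is an eigenstate of `A − s·λ·B` for some `λ > 0`. -/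
theorem correlation_extreme_iff_eigenstate {n : ℕ} (hn : 1 ≤ n)
    (W A B : Matrix (Fin n) (Fin n) ℂ)
    (hW : W.PosSemidef) (htr : W.trace = 1)
    (hA : A.IsHermitian) (hB : B.IsHermitian)
    (hσA : 0 < Real.sqrt (matVar W A)) (hσB : 0 < Real.sqrt (matVar W B))
    (s : ℝ) (hs : s = 1 ∨ s = -1) :
    matCov W A B / (Real.sqrt (matVar W A) * Real.sqrt (matVar W B)) = s ↔
      ∃ lam : ℝ, 0 < lam ∧ ∃ μ : ℝ,
        (A - ((s * lam : ℝ) : ℂ) • B) * W = (μ : ℂ) • W :=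
  correlation_extreme_iff_eigenstate_general W A B hW htr hA hB hσA hσB s hs
end

section
/- Let β > 0 and D > 0, and let υ : ℝ → ℝ be continuous, bounded below, of at most polynomial growth, and such that ∫ e^{−β·υ(q)} dq < ∞. For τ ≥ 0 define the Gauss transform υ_τ(q) := ∫ (2π)^{−1/2}·e^{−ξ²/2}·υ(q + ξ·√(τ·D)) dξ and the classical partition function z(τ) := ∫ e^{−β·υ_τ(q)} dq. Then z is antitone in τ: for all 0 ≤ τ ≤ τ' one has z(τ') ≤ z(τ). -/
/-!
Write `υ_v(q) = E[υ(q + X)]` with `X ~ N(0, v)`. Since `N(0, w) ∗ N(0, v) = N(0, w + v)`, the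
transform is a semigroup: `υ_{w+v}(q) = E[υ_v(q + Y)]` with `Y ~ N(0, w)`. Jensen's inequality for
the convex function `t ↦ exp(-β t)` gives `exp(-β υ_{w+v}(q)) ≤ E[exp(-β υ_v(q + Y))]`, and
integrating over `q` (Tonelli and translation invariance of Lebesgue measure) yields
`z(w + v) ≤ z(v)`. Working with lower Lebesgue integrals avoids proving integrability of every
`exp(-β υ_v)`: they are all bounded by `z(0) < ∞`.
-/

open MeasureTheory ProbabilityTheory
open scoped NNReal ENNReal

lemma one_add_abs_add_le (a b : ℝ) : 1 + |a + b| ≤ (1 + |a|) * (1 + |b|) := by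
  nlinarith [abs_add_le a b, mul_nonneg (abs_nonneg a) (abs_nonneg b)]

lemma integrable_gaussianReal_of_abs_le {f : ℝ → ℝ} {m : ℝ} {v : ℝ≥0} {C : ℝ} {k : ℕ}
    (hf : AEStronglyMeasurable f (gaussianReal m v)) (hb : ∀ x, |f x| ≤ C * (1 + |x|) ^ k) :
    Integrable f (gaussianReal m v) := by
  have hid : MemLp (id : ℝ → ℝ) k (gaussianReal m v) := memLp_id_gaussianReal' _ (by simp)
  have hmom := (memLp_const (μ := gaussianReal m v) (p := k) (1 : ℝ)).add hid.norm
  refine (hmom.integrable_norm_pow'.const_mul C).mono' hf (.of_forall fun x => ?_)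
  simpa [abs_of_nonneg (by positivity : (0 : ℝ) ≤ 1 + |x|)] using hb x

lemma MeasureTheory.Integrable.integral_conv_left {M E : Type*} [AddMonoid M]
    [MeasurableSpace M] [MeasurableAdd₂ M] [NormedAddCommGroup E] [NormedSpace ℝ E]
    {μ ν : Measure M} [SFinite μ] [SFinite ν] {f : M → E}
    (hf : Integrable f (μ ∗ ν)) : Integrable (fun x => ∫ y, f (x + y) ∂ν) μ :=
  ((integrable_map_measure hf.1 (by fun_prop)).mp hf).integral_prod_left

-- Gaussian smoothing with variance `v`; the paper's `υ_τ` is `gaussTransform υ (τ * D)`.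
noncomputable def gaussTransform (f : ℝ → ℝ) (v : ℝ≥0) (q : ℝ) : ℝ :=
  ∫ x, f (q + x) ∂gaussianReal 0 v

section gaussTransform

variable {f : ℝ → ℝ}

lemma integrable_comp_add_gaussianReal {C : ℝ} {k : ℕ} (hf : Measurable f)
    (hb : ∀ x, |f x| ≤ C * (1 + |x|) ^ k) (m : ℝ) (v : ℝ≥0) (q : ℝ) :
    Integrable (fun x => f (q + x)) (gaussianReal m v) := by
  have hC : 0 ≤ C := by simpa using (abs_nonneg _).trans (hb 0)
  refine integrable_gaussianReal_of_abs_le (C := C * (1 + |q|) ^ k) (k := k)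
    (hf.comp (measurable_const_add q)).aestronglyMeasurable fun x => ?_
  calc |f (q + x)| ≤ C * (1 + |q + x|) ^ k := hb _
    _ ≤ C * ((1 + |q|) * (1 + |x|)) ^ k := by gcongr; exact one_add_abs_add_le q x
    _ = C * (1 + |q|) ^ k * (1 + |x|) ^ k := by rw [mul_pow, mul_assoc]

lemma measurable_gaussTransform (hf : Measurable f) (v : ℝ≥0) :
    Measurable (gaussTransform f v) :=
  (StronglyMeasurable.integral_prod_right' (f := fun p : ℝ × ℝ => f (p.1 + p.2))
    (hf.comp measurable_add).stronglyMeasurable).measurable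

@[simp]
lemma gaussTransform_zero : gaussTransform f 0 = f := by
  ext q
  simp [gaussTransform, gaussianReal_zero_var]

lemma le_gaussTransform {C c : ℝ} {k : ℕ} (hf : Measurable f)
    (hb : ∀ x, |f x| ≤ C * (1 + |x|) ^ k) (hc : ∀ x, c ≤ f x) (v : ℝ≥0) (q : ℝ) :
    c ≤ gaussTransform f v q := by
  simpa [gaussTransform] using integral_mono (integrable_const c)
    (integrable_comp_add_gaussianReal hf hb 0 v q) fun x => hc (q + x)

lemma gaussTransform_add (v w : ℝ≥0) (q : ℝ)
    (hf : Integrable (fun x => f (q + x)) (gaussianReal 0 (w + v))) :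
    Integrable (fun x => gaussTransform f v (q + x)) (gaussianReal 0 w) ∧
      gaussTransform f (w + v) q = ∫ x, gaussTransform f v (q + x) ∂gaussianReal 0 w := by
  have hconv : gaussianReal 0 w ∗ gaussianReal 0 v = gaussianReal 0 (w + v) := by
    simpa using gaussianReal_conv_gaussianReal (m₁ := 0) (m₂ := 0) (v₁ := w) (v₂ := v)
  rw [← hconv] at hf
  simp only [gaussTransform, add_assoc]
  exact ⟨hf.integral_conv_left, by rw [← hconv, integral_conv hf]⟩

lemma integral_stdGaussian_mul_eq_gaussTransform (hf : Measurable f) (σ q : ℝ) :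
    ∫ ξ, (√(2 * Real.pi))⁻¹ * Real.exp (-ξ ^ 2 / 2) * f (q + ξ * σ) =
      gaussTransform f (.mk (σ ^ 2) (sq_nonneg σ)) q := by
  have hpdf : ∀ ξ, (√(2 * Real.pi))⁻¹ * Real.exp (-ξ ^ 2 / 2) = gaussianPDFReal 0 1 ξ := by
    simp [gaussianPDFReal]
  have hmap : (gaussianReal 0 1).map (σ * ·) = gaussianReal 0 (.mk (σ ^ 2) (sq_nonneg σ)) := by
    simpa using gaussianReal_map_const_mul (μ := 0) (v := 1) σ
  simp_rw [hpdf, ← smul_eq_mul, ← integral_gaussianReal_eq_integral_smul one_ne_zero]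
  unfold gaussTransform
  rw [← hmap, integral_map (by fun_prop)
    (by exact (hf.comp (measurable_const_add q)).aestronglyMeasurable)]
  simp only [smul_eq_mul, mul_comm σ]

end gaussTransform

lemma exp_integral_le_integral_exp {α : Type*} [MeasurableSpace α] {μ : Measure α}
    [IsProbabilityMeasure μ] {g : α → ℝ} (hg : Integrable g μ)
    (hexp : Integrable (fun x => Real.exp (g x)) μ) :
    Real.exp (∫ x, g x ∂μ) ≤ ∫ x, Real.exp (g x) ∂μ :=
  convexOn_exp.map_integral_le Real.continuous_exp.continuousOn isClosed_univ
    (.of_forall fun _ => trivial) hg hexp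

lemma lintegral_lintegral_add_eq {G : Type*} [AddGroup G] [MeasurableSpace G] [MeasurableAdd₂ G]
    {μ ν : Measure G} [SFinite μ] [μ.IsAddRightInvariant] [IsProbabilityMeasure ν]
    {g : G → ℝ≥0∞} (hg : Measurable g) : ∫⁻ q, ∫⁻ x, g (q + x) ∂ν ∂μ = ∫⁻ q, g q ∂μ := by
  rw [lintegral_lintegral_swap (f := fun q x => g (q + x)) (hg.comp measurable_add).aemeasurable]
  simp [lintegral_add_right_eq_self]

section antitone

variable {f : ℝ → ℝ} {β C c : ℝ} {k : ℕ}

lemma ofReal_exp_neg_gaussTransform_add_le (hβ : 0 ≤ β) (hf : Measurable f)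
    (hb : ∀ x, |f x| ≤ C * (1 + |x|) ^ k) (hc : ∀ x, c ≤ f x) (v w : ℝ≥0) (q : ℝ) :
    ENNReal.ofReal (Real.exp (-β * gaussTransform f (w + v) q)) ≤
      ∫⁻ x, ENNReal.ofReal (Real.exp (-β * gaussTransform f v (q + x))) ∂gaussianReal 0 w := by
  obtain ⟨hint, heq⟩ :=
    gaussTransform_add v w q (integrable_comp_add_gaussianReal hf hb 0 (w + v) q)
  have hexp : Integrable (fun x => Real.exp (-β * gaussTransform f v (q + x)))
      (gaussianReal 0 w) := by
    have hmeas := ((measurable_gaussTransform hf v).comp (measurable_const_add q)).const_mul (-β)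
    refine .of_bound hmeas.exp.aestronglyMeasurable (Real.exp (-β * c)) (.of_forall fun x => ?_)
    rw [Real.norm_of_nonneg (Real.exp_pos _).le, Real.exp_le_exp]
    exact mul_le_mul_of_nonpos_left (le_gaussTransform hf hb hc v _) (neg_nonpos.2 hβ)
  rw [← ofReal_integral_eq_lintegral_ofReal hexp (.of_forall fun _ => (Real.exp_pos _).le)]
  gcongr
  rw [heq, ← integral_const_mul]
  exact exp_integral_le_integral_exp (hint.const_mul _) hexp

lemma antitone_lintegral_exp_neg_gaussTransform (hβ : 0 ≤ β) (hf : Measurable f)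
    (hb : ∀ x, |f x| ≤ C * (1 + |x|) ^ k) (hc : ∀ x, c ≤ f x) :
    Antitone fun v => ∫⁻ q, ENNReal.ofReal (Real.exp (-β * gaussTransform f v q)) := by
  intro v w' hvw
  obtain ⟨w, rfl⟩ : ∃ w, w' = w + v := ⟨w' - v, (tsub_add_cancel_of_le hvw).symm⟩
  calc ∫⁻ q, ENNReal.ofReal (Real.exp (-β * gaussTransform f (w + v) q))
      ≤ ∫⁻ q, ∫⁻ x, ENNReal.ofReal (Real.exp (-β * gaussTransform f v (q + x)))
          ∂gaussianReal 0 w :=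
        lintegral_mono (ofReal_exp_neg_gaussTransform_add_le hβ hf hb hc v w)
    _ = ∫⁻ q, ENNReal.ofReal (Real.exp (-β * gaussTransform f v q)) :=
        lintegral_lintegral_add_eq
          ((measurable_gaussTransform hf v).const_mul (-β)).exp.ennreal_ofReal

end antitone

/-- The classical partition function with Gauss-transformed potential is antitone
in the smoothing parameter `τ`. -/
theorem partition_function_antitone
    (β D : ℝ) (hβ : 0 < β) (hD : 0 < D)
    (υ : ℝ → ℝ) (hcont : Continuous υ)
    (hbdd : ∃ c : ℝ, ∀ q : ℝ, c ≤ υ q)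
    (hpoly : ∃ (C : ℝ) (k : ℕ), ∀ q : ℝ, |υ q| ≤ C * (1 + |q|) ^ k)
    (hintegrable : Integrable (fun q : ℝ => Real.exp (-β * υ q)))
    (υτ : ℝ → ℝ → ℝ)
    (hυτ : ∀ τ q, υτ τ q =
      ∫ ξ : ℝ, (Real.sqrt (2 * Real.pi))⁻¹ * Real.exp (-ξ ^ 2 / 2) *
        υ (q + ξ * Real.sqrt (τ * D)))
    (z : ℝ → ℝ)
    (hz : ∀ τ, z τ = ∫ q : ℝ, Real.exp (-β * υτ τ q)) :
    ∀ τ τ' : ℝ, 0 ≤ τ → τ ≤ τ' → z τ' ≤ z τ := by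
  intro τ τ' _ hττ'
  obtain ⟨c, hc⟩ := hbdd
  obtain ⟨C, k, hb⟩ := hpoly
  have hmeas := hcont.measurable
  set L := fun v => ∫⁻ q, ENNReal.ofReal (Real.exp (-β * gaussTransform υ v q))
  have hanti : Antitone L := antitone_lintegral_exp_neg_gaussTransform hβ.le hmeas hb hc
  have hzL : ∀ s, z s = (L (.mk (√(s * D) ^ 2) (sq_nonneg _))).toReal := fun s => by
    simp_rw [hz, hυτ, integral_stdGaussian_mul_eq_gaussTransform hmeas]
    exact integral_eq_lintegral_of_nonneg_ae (.of_forall fun _ => (Real.exp_pos _).le)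
      ((measurable_gaussTransform hmeas _).const_mul (-β)).exp.aestronglyMeasurable
  have hL0 : L 0 ≠ ∞ := by simpa [L] using hintegrable.lintegral_lt_top.ne
  rw [hzL, hzL]
  refine ENNReal.toReal_mono (ne_top_of_le_ne_top hL0 (hanti bot_le)) (hanti ?_)
  change √(τ * D) ^ 2 ≤ √(τ' * D) ^ 2
  gcongr
end

section
/- (Hidden-variable model for spin 1/2.) Let a ∈ ℝ³ with a ≠ 0, let a₀ ∈ ℝ, and let p ∈ ℝ³ with ‖p‖ ≤ 1. Then (1/(4π)) · ∫_{S²} ( a₀ + ‖a‖·sgn((p + ω)·a) ) dσ(ω) = a₀ + p·a, where the integral is over the unit sphere S² ⊂ ℝ³ with respect to its surface measure σ (total mass 4π), and sgn(ξ) := 1 for ξ ≥ 0 and sgn(ξ) := −1 for ξ < 0. (The right-hand side equals the quantum expectation value tr(W·A) of the observable A = a₀·I + a·S in the state W = (1/2)(I + p·S) on ℂ².) -/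
open MeasureTheory Metric

/-- The sign function with `sgn 0 = 1`. -/
noncomputable def sgn' (ξ : ℝ) : ℝ := if 0 ≤ ξ then 1 else -1

/-- The Euclidean dot product on `EuclideanSpace ℝ (Fin 3)`. -/
noncomputable def dotE (u v : EuclideanSpace ℝ (Fin 3)) : ℝ :=
  u 0 * v 0 + u 1 * v 1 + u 2 * v 2

/-!
Put `a = ‖a‖ u` with `‖u‖ = 1` and `t = p·u ∈ [-1, 1]`; the claim becomes that `sgn (t + ω·u)`
has mean `t` on the sphere, i.e. that the cap `{ω·u < -t}` has area `2π (1 - t)` (Archimedes).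
Extending the integrand to be constant along rays turns the sphere integral into three times a
ball integral, and a rotation makes `u = e₀`. The sign is `-1` exactly on the sector
`{‖y‖ < 1, y₀ < -t ‖y‖}`, whose volume `2π (1 - t) / 3` is computed for `t ≥ 0` by slicing
orthogonally to `e₀` into discs. For `t < 0` the symmetry `y ↦ -y` exchanges the sector with the
complement of the sector of parameter `-t`; the lateral surface of the cone, where the two differ,
is null because the sector volumes depend continuously on `t`.
-/

open Set Filter Topology Real Module

local notation "ℝ²" => EuclideanSpace ℝ (Fin 2)
local notation "ℝ³" => EuclideanSpace ℝ (Fin 3)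

lemma measurable_sgn' : Measurable sgn' :=
  Measurable.ite measurableSet_Ici measurable_const measurable_const

lemma abs_sgn'_le_one (ξ : ℝ) : |sgn' ξ| ≤ 1 := by
  unfold sgn'
  split_ifs <;> simp

lemma sgn'_mul_of_pos {r : ℝ} (hr : 0 < r) (ξ : ℝ) : sgn' (r * ξ) = sgn' ξ := by
  simp only [sgn', mul_nonneg_iff_of_pos_left hr]

theorem integral_toSphere_eq_mul_setIntegral_ball {E : Type*} [NormedAddCommGroup E]
    [NormedSpace ℝ E] [FiniteDimensional ℝ E] [MeasurableSpace E] [BorelSpace E] [Nontrivial E]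
    (μ : Measure E) [μ.IsAddHaarMeasure] {f : E → ℝ}
    (hf : ∀ r : ℝ, 0 < r → ∀ x, f (r • x) = f x) :
    ∫ ω : sphere (0 : E) 1, f ω ∂μ.toSphere = finrank ℝ E * ∫ x in ball (0 : E) 1, f x ∂μ := by
  let one : Ioi (0 : ℝ) := ⟨1, mem_Ioi.2 one_pos⟩
  have hradial : (Measure.volumeIoiPow (finrank ℝ E - 1)).real (Iio one) = (finrank ℝ E : ℝ)⁻¹ := by
    rw [measureReal_def, Measure.volumeIoiPow_apply_Iio, Nat.cast_pred finrank_pos]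
    simp [one]
  have hpolar := μ.measurePreserving_homeomorphUnitSphereProd.integral_comp
    (Homeomorph.measurableEmbedding _) (fun p ↦ f p.1 * (Iio one).indicator 1 p.2)
  have hcomp : ∀ x : ({0}ᶜ : Set E), f (homeomorphUnitSphereProd E x).1 *
      (Iio one).indicator 1 (homeomorphUnitSphereProd E x).2 = (ball 0 1).indicator f x := by
    intro x
    have hx : 0 < ‖(x : E)‖ := norm_pos_iff.2 x.2
    rw [homeomorphUnitSphereProd_apply_fst_coe, hf _ (inv_pos.2 hx)]
    have hlt : (homeomorphUnitSphereProd E x).2 < one ↔ ‖(x : E)‖ < 1 := by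
      rw [← Subtype.coe_lt_coe, homeomorphUnitSphereProd_apply_snd_coe]
    simp only [indicator, mem_Iio, hlt, mem_ball_zero_iff]
    split_ifs <;> simp
  rw [integral_prod_mul (fun ω : sphere (0 : E) 1 ↦ f ω) ((Iio one).indicator 1),
    integral_indicator_one measurableSet_Iio, hradial] at hpolar
  simp_rw [hcomp] at hpolar
  rw [integral_subtype_comap (measurableSet_singleton _).compl
    (fun x ↦ (ball (0 : E) 1).indicator f x), restrict_compl_singleton,
    integral_indicator measurableSet_ball] at hpolar
  have hdim : (finrank ℝ E : ℝ) ≠ 0 := Nat.cast_ne_zero.2 finrank_pos.ne'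
  rw [hpolar]
  field_simp

theorem OrthonormalBasis.exists_apply_zero_eq {E : Type*} [NormedAddCommGroup E]
    [InnerProductSpace ℝ E] [FiniteDimensional ℝ E] {n : ℕ} (hn : finrank ℝ E = n + 1)
    {u : E} (hu : ‖u‖ = 1) : ∃ b : OrthonormalBasis (Fin (n + 1)) ℝ E, b 0 = u := by
  have hu' : Orthonormal ℝ (({0} : Set (Fin (n + 1))).domRestrict fun _ ↦ u) :=
    ⟨fun _ ↦ hu, fun i j hij ↦ absurd (Subsingleton.elim i j) hij⟩
  obtain ⟨b, hb⟩ := hu'.exists_orthonormalBasis_extension_of_card_eq (by simpa using hn)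
  exact ⟨b, hb 0 rfl⟩

theorem setIntegral_ball_comp_linearIsometryEquiv {E F : Type*}
    [NormedAddCommGroup E] [InnerProductSpace ℝ E] [FiniteDimensional ℝ E]
    [MeasurableSpace E] [BorelSpace E]
    [NormedAddCommGroup F] [InnerProductSpace ℝ F] [FiniteDimensional ℝ F]
    [MeasurableSpace F] [BorelSpace F] (L : E ≃ₗᵢ[ℝ] F) (f : F → ℝ) (r : ℝ) :
    ∫ x in ball (0 : E) r, f (L x) = ∫ y in ball (0 : F) r, f y := by
  rw [← L.measurePreserving.setIntegral_preimage_emb L.toHomeomorph.measurableEmbedding]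
  congr 2
  ext x
  simp

theorem setIntegral_ball_inner_eq_apply_zero {n : ℕ} {u : EuclideanSpace ℝ (Fin (n + 1))}
    (hu : ‖u‖ = 1) (g : ℝ → ℝ → ℝ) (r : ℝ) :
    ∫ x in ball 0 r, g (inner ℝ x u) ‖x‖ =
      ∫ y in ball (0 : EuclideanSpace ℝ (Fin (n + 1))) r, g (y 0) ‖y‖ := by
  obtain ⟨b, hb⟩ := OrthonormalBasis.exists_apply_zero_eq finrank_euclideanSpace_fin hu
  rw [← setIntegral_ball_comp_linearIsometryEquiv b.repr (fun y ↦ g (y 0) ‖y‖)]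
  simp only [LinearIsometryEquiv.norm_map, b.repr_apply_apply, hb, real_inner_comm]

noncomputable def euclideanCons (p : ℝ × ℝ²) : ℝ³ := WithLp.toLp 2 (Fin.cons p.1 p.2.ofLp)

@[simp]
theorem euclideanCons_apply_zero (p : ℝ × ℝ²) : euclideanCons p 0 = p.1 := rfl

theorem norm_euclideanCons_sq (p : ℝ × ℝ²) : ‖euclideanCons p‖ ^ 2 = p.1 ^ 2 + ‖p.2‖ ^ 2 := by
  simp [euclideanCons, EuclideanSpace.norm_sq_eq, Fin.sum_univ_succ]

theorem measurePreserving_euclideanCons : MeasurePreserving euclideanCons := by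
  have h := (PiLp.volume_preserving_toLp (Fin 3)).comp
    ((volume_preserving_piFinSuccAbove (fun _ : Fin 3 ↦ ℝ) 0).symm.comp
      ((MeasurePreserving.id volume).prod (PiLp.volume_preserving_ofLp (Fin 2))))
  convert h using 1
  · ext p i
    simp [euclideanCons, MeasurableEquiv.piFinSuccAbove_symm_apply]
  · exact Measure.volume_eq_prod _ _

theorem volume_eq_lintegral_volume_slice {S : Set ℝ³} (hS : MeasurableSet S) :
    volume S = ∫⁻ s, volume {z | euclideanCons (s, z) ∈ S} := by
  rw [← measurePreserving_euclideanCons.measure_preimage hS.nullMeasurableSet,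
    Measure.volume_eq_prod, Measure.prod_apply (measurePreserving_euclideanCons.measurable hS)]
  rfl

theorem volume_setOf_norm_sq_lt (A : ℝ) :
    volume {z : ℝ² | ‖z‖ ^ 2 < A} = ENNReal.ofReal (π * A) := by
  have hball : {z : ℝ² | ‖z‖ ^ 2 < A} = ball 0 √A := by
    ext z
    simp [Real.lt_sqrt (norm_nonneg z)]
  rw [hball, EuclideanSpace.volume_ball_fin_two, ← ENNReal.ofReal_pow (sqrt_nonneg A),
    ← ENNReal.ofReal_mul (sq_nonneg _)]
  rcases le_total 0 A with hA | hA
  · rw [sq_sqrt hA, mul_comm]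
  · simp [sqrt_eq_zero'.2 hA,
      ENNReal.ofReal_of_nonpos (mul_nonpos_of_nonneg_of_nonpos pi_pos.le hA)]

theorem setLIntegral_Ioc_ofReal {f : ℝ → ℝ} (hf : Continuous f) {a b : ℝ} (hab : a ≤ b)
    (hf0 : ∀ x ∈ Ioc a b, 0 ≤ f x) :
    ∫⁻ x in Ioc a b, ENNReal.ofReal (f x) = ENNReal.ofReal (∫ x in a..b, f x) := by
  rw [intervalIntegral.integral_of_le hab, ofReal_integral_eq_lintegral_ofReal
    (hf.integrableOn_Icc.mono_set Ioc_subset_Icc_self)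
    ((ae_restrict_iff' measurableSet_Ioc).2 (.of_forall hf0))]

/-- The part of the unit ball within angle `arccos t` of `-e₀`. -/
def sector (t : ℝ) : Set ℝ³ := {y | ‖y‖ < 1 ∧ t * ‖y‖ + y 0 < 0}

/-- `sector t` together with the lateral surface of its cone. -/
def sector' (t : ℝ) : Set ℝ³ := {y | ‖y‖ < 1 ∧ t * ‖y‖ + y 0 ≤ 0}

lemma isOpen_sector (t : ℝ) : IsOpen (sector t) :=
  (isOpen_lt continuous_norm continuous_const).inter
    (isOpen_lt (by fun_prop : Continuous fun y : ℝ³ ↦ t * ‖y‖ + y 0) continuous_const)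

lemma sector_slice_iff_of_le {t s n w : ℝ} (hs : s < 0) (hst : s ≤ -t)
    (hn : 0 ≤ n) (hnw : n ^ 2 = s ^ 2 + w) :
    n < 1 ∧ t * n + s < 0 ↔ w < 1 - s ^ 2 := by
  constructor
  · rintro ⟨hn1, -⟩
    nlinarith
  · intro hw1
    have hn1 : n < 1 := by nlinarith
    exact ⟨hn1, by nlinarith⟩

lemma sector_slice_iff_of_lt {t s n w : ℝ} (ht1 : t ≤ 1) (hst : -t < s) (hs : s < 0)
    (hn : 0 ≤ n) (hnw : n ^ 2 = s ^ 2 + w) :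
    n < 1 ∧ t * n + s < 0 ↔ w < s ^ 2 * (1 - t ^ 2) / t ^ 2 := by
  have ht : 0 < t := by linarith
  rw [lt_div_iff₀ (by positivity)]
  constructor
  · rintro ⟨-, hts⟩
    nlinarith [mul_self_lt_mul_self (by positivity) (show t * n < -s by linarith)]
  · intro hw1
    have htn : t * n < -s := by nlinarith
    exact ⟨by nlinarith, by linarith⟩

lemma volume_sector_slice_of_le {t s : ℝ} (hs : s < 0) (hst : s ≤ -t) :
    volume {z | euclideanCons (s, z) ∈ sector t} = ENNReal.ofReal (π * (1 - s ^ 2)) := by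
  rw [← volume_setOf_norm_sq_lt]
  congr 1
  ext z
  exact sector_slice_iff_of_le hs hst (norm_nonneg _) (norm_euclideanCons_sq (s, z))

lemma volume_sector_slice_of_lt {t s : ℝ} (ht1 : t ≤ 1) (hst : -t < s) (hs : s < 0) :
    volume {z | euclideanCons (s, z) ∈ sector t} =
      ENNReal.ofReal (π * (s ^ 2 * (1 - t ^ 2) / t ^ 2)) := by
  rw [← volume_setOf_norm_sq_lt]
  congr 1
  ext z
  exact sector_slice_iff_of_lt ht1 hst hs (norm_nonneg _) (norm_euclideanCons_sq (s, z))

lemma sector_slice_eq_empty {t s : ℝ} (ht : 0 ≤ t) (hs : 0 < s) :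
    {z | euclideanCons (s, z) ∈ sector t} = ∅ := by
  ext z
  simp only [sector, mem_ofPred_eq, euclideanCons_apply_zero, mem_empty_iff_false, iff_false]
  rintro ⟨-, h⟩
  nlinarith [norm_nonneg (euclideanCons (s, z))]

-- Below height `-t` the slices are cut out by the sphere, above it by the cone.
lemma volume_sector_slice {t s : ℝ} (ht0 : 0 ≤ t) (ht1 : t ≤ 1) (hs0 : s ≠ 0) :
    volume {z | euclideanCons (s, z) ∈ sector t} =
      (Ioc (-1) (-t)).indicator (fun s ↦ ENNReal.ofReal (π * (1 - s ^ 2))) s +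
      (Ioc (-t) 0).indicator (fun s ↦ ENNReal.ofReal (π * (s ^ 2 * (1 - t ^ 2) / t ^ 2))) s := by
  rcases hs0.lt_or_gt with hs | hs
  · rcases le_or_gt s (-t) with hst | hst
    · rw [volume_sector_slice_of_le hs hst,
        indicator_of_notMem (show s ∉ Ioc (-t) 0 by simp [hst]), add_zero]
      by_cases hs1 : -1 < s
      · rw [indicator_of_mem (show s ∈ Ioc (-1) (-t) from ⟨hs1, hst⟩)]
      · rw [indicator_of_notMem (by simp [hs1]), ENNReal.ofReal_of_nonpos]
        exact mul_nonpos_of_nonneg_of_nonpos pi_pos.le (by nlinarith [not_lt.1 hs1])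
    · rw [volume_sector_slice_of_lt ht1 hst hs,
        indicator_of_notMem (show s ∉ Ioc (-1) (-t) by simp [hst.not_ge]),
        indicator_of_mem (show s ∈ Ioc (-t) 0 from ⟨hst, hs.le⟩), zero_add]
  · rw [sector_slice_eq_empty ht0 hs, measure_empty,
      indicator_of_notMem (show s ∉ Ioc (-1) (-t) from fun h ↦ by linarith [h.2]),
      indicator_of_notMem (show s ∉ Ioc (-t) 0 by simp [hs.not_ge]), add_zero]

theorem volume_sector_of_nonneg {t : ℝ} (ht0 : 0 ≤ t) (ht1 : t ≤ 1) :
    volume (sector t) = ENNReal.ofReal (2 * π / 3 * (1 - t)) := by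
  have hcap : ∀ s ∈ Icc (-1) (-t), 0 ≤ π * (1 - s ^ 2) := fun s hs ↦
    mul_nonneg pi_pos.le (by nlinarith [hs.1, hs.2])
  have hcone : ∀ s, 0 ≤ π * (s ^ 2 * (1 - t ^ 2) / t ^ 2) := fun s ↦
    mul_nonneg pi_pos.le (div_nonneg (mul_nonneg (sq_nonneg _) (by nlinarith)) (sq_nonneg _))
  rw [volume_eq_lintegral_volume_slice (isOpen_sector t).measurableSet,
    lintegral_congr_ae ((Measure.ae_ne volume 0).mono fun s ↦ volume_sector_slice ht0 ht1),
    lintegral_add_left ((by fun_prop : Measurable _).indicator measurableSet_Ioc),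
    lintegral_indicator measurableSet_Ioc, lintegral_indicator measurableSet_Ioc,
    setLIntegral_Ioc_ofReal (by fun_prop) (by linarith) fun s hs ↦ hcap s (Ioc_subset_Icc_self hs),
    setLIntegral_Ioc_ofReal (by fun_prop) (by linarith) fun s _ ↦ hcone s,
    ← ENNReal.ofReal_add (intervalIntegral.integral_nonneg (by linarith) hcap)
      (intervalIntegral.integral_nonneg (by linarith) fun s _ ↦ hcone s)]
  congr 1
  rcases ht0.eq_or_lt with rfl | ht
  · simp [mul_sub, integral_pow]
    ring
  · simp [mul_sub, mul_div_assoc, integral_pow]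
    field_simp
    ring

-- `sector' t` lies in every `sector t'` with `t' < t`, up to the origin.
theorem volume_sector'_of_pos {t : ℝ} (ht0 : 0 < t) (ht1 : t ≤ 1) :
    volume (sector' t) = ENNReal.ofReal (2 * π / 3 * (1 - t)) := by
  refine le_antisymm ?_ ?_
  · have hle : ∀ t' ∈ Ioo 0 t, volume (sector' t) ≤ ENNReal.ofReal (2 * π / 3 * (1 - t')) := by
      intro t' ht'
      have hsub : sector' t ⊆ sector t' ∪ {0} := by
        rintro y ⟨hy1, hy⟩
        rcases eq_or_ne y 0 with rfl | hy0
        · exact Or.inr rfl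
        · exact Or.inl ⟨hy1, by nlinarith [norm_pos_iff.2 hy0, ht'.2]⟩
      calc _ ≤ volume (sector t' ∪ {0}) := measure_mono hsub
        _ ≤ volume (sector t') + volume ({0} : Set ℝ³) := measure_union_le _ _
        _ = _ := by
          rw [measure_singleton, add_zero, volume_sector_of_nonneg ht'.1.le (by linarith [ht'.2])]
    have hlim : Tendsto (fun t' ↦ ENNReal.ofReal (2 * π / 3 * (1 - t'))) (𝓝[<] t)
        (𝓝 (ENNReal.ofReal (2 * π / 3 * (1 - t)))) :=
      ((ENNReal.continuous_ofReal.comp (by fun_prop)).tendsto t).mono_left nhdsWithin_le_nhds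
    exact ge_of_tendsto hlim (eventually_of_mem (Ioo_mem_nhdsLT ht0) hle)
  · rw [← volume_sector_of_nonneg ht0.le ht1]
    exact measure_mono fun y hy ↦ ⟨hy.1, hy.2.le⟩

theorem volume_sector_add_volume_sector'_neg (t : ℝ) :
    volume (sector t) + volume (sector' (-t)) = volume (ball (0 : ℝ³) 1) := by
  have hneg : Neg.neg ⁻¹' sector' (-t) = ball 0 1 \ sector t := by
    ext y
    simp only [sector, sector', mem_preimage, mem_ofPred_eq, norm_neg, Set.mem_sdiff,
      mem_ball_zero_iff, not_and, not_lt, WithLp.ofLp_neg, Pi.neg_apply]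
    constructor
    · exact fun ⟨h1, h⟩ ↦ ⟨h1, fun _ ↦ by linarith⟩
    · exact fun ⟨h1, h⟩ ↦ ⟨h1, by linarith [h h1]⟩
  rw [← Measure.measure_preimage_neg volume (sector' (-t)), hneg,
    measure_add_sdiff (isOpen_sector t).measurableSet.nullMeasurableSet,
    union_eq_right.2 fun y hy ↦ mem_ball_zero_iff.2 hy.1]

theorem volume_sector {t : ℝ} (ht : |t| ≤ 1) :
    volume (sector t) = ENNReal.ofReal (2 * π / 3 * (1 - t)) := by
  obtain ⟨ht1, ht2⟩ := abs_le.1 ht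
  rcases le_or_gt 0 t with ht0 | ht0
  · exact volume_sector_of_nonneg ht0 ht2
  · have h := volume_sector_add_volume_sector'_neg t
    rw [volume_sector'_of_pos (neg_pos.2 ht0) (by linarith),
      EuclideanSpace.volume_ball_fin_three] at h
    rw [ENNReal.eq_sub_of_add_eq ENNReal.ofReal_ne_top h, ENNReal.ofReal_one, one_pow, one_mul,
      ← ENNReal.ofReal_sub _ (by nlinarith [pi_pos])]
    ring_nf

theorem setIntegral_ball_sgn' {t : ℝ} (ht : |t| ≤ 1) :
    ∫ y in ball (0 : ℝ³) 1, sgn' (t * ‖y‖ + y 0) = 4 * π / 3 * t := by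
  have hpt : ∀ y ∈ ball (0 : ℝ³) 1,
      sgn' (t * ‖y‖ + y 0) = 1 - 2 * (sector t).indicator 1 y := by
    intro y hy
    by_cases h : t * ‖y‖ + y 0 < 0
    · rw [indicator_of_mem (show y ∈ sector t from ⟨mem_ball_zero_iff.1 hy, h⟩), sgn',
        if_neg h.not_ge]
      norm_num
    · rw [indicator_of_notMem (fun hy ↦ h hy.2), sgn', if_pos (not_lt.1 h)]
      norm_num
  have hmeas := (isOpen_sector t).measurableSet
  have hB : IntegrableOn (fun _ : ℝ³ ↦ (1 : ℝ)) (ball 0 1) :=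
    integrableOn_const measure_ball_lt_top.ne
  rw [setIntegral_congr_fun measurableSet_ball hpt,
    integral_sub hB (g := fun y ↦ 2 * (sector t).indicator 1 y) ((hB.indicator hmeas).const_mul 2),
    integral_const_mul, setIntegral_const, integral_indicator_one hmeas,
    measureReal_restrict_apply hmeas, inter_eq_left.2 fun y hy ↦ mem_ball_zero_iff.2 hy.1,
    measureReal_def, measureReal_def, volume_sector ht, EuclideanSpace.volume_ball_fin_three,
    ENNReal.toReal_ofReal (by nlinarith [pi_pos, abs_le.1 ht])]
  simp [ENNReal.toReal_ofReal (by positivity : 0 ≤ π * 4 / 3)]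
  ring

theorem integral_sgn'_add_inner_toSphere {t : ℝ} (ht : |t| ≤ 1) {u : ℝ³} (hu : ‖u‖ = 1) :
    ∫ ω : sphere (0 : ℝ³) 1, sgn' (t + inner ℝ (ω : ℝ³) u) ∂(volume : Measure ℝ³).toSphere =
      4 * π * t := by
  have hhom : ∀ r : ℝ, 0 < r → ∀ x : ℝ³,
      sgn' (t * ‖r • x‖ + inner ℝ (r • x) u) = sgn' (t * ‖x‖ + inner ℝ x u) := by
    intro r hr x
    rw [norm_smul, real_inner_smul_left, Real.norm_of_nonneg hr.le,
      ← sgn'_mul_of_pos hr (t * ‖x‖ + inner ℝ x u)]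
    ring_nf
  have hsphere : ∀ ω : sphere (0 : ℝ³) 1,
      sgn' (t + inner ℝ (ω : ℝ³) u) = sgn' (t * ‖(ω : ℝ³)‖ + inner ℝ (ω : ℝ³) u) := by
    intro ω
    rw [norm_eq_of_mem_sphere, mul_one]
  simp_rw [hsphere]
  rw [integral_toSphere_eq_mul_setIntegral_ball volume
      (f := fun x ↦ sgn' (t * ‖x‖ + inner ℝ x u)) hhom,
    setIntegral_ball_inner_eq_apply_zero hu (fun a n ↦ sgn' (t * n + a)),
    setIntegral_ball_sgn' ht, finrank_euclideanSpace_fin]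
  ring

lemma dotE_eq_inner (u v : ℝ³) : dotE u v = inner ℝ u v := by
  simp [dotE, PiLp.inner_apply, Fin.sum_univ_three, mul_comm]

/-- Hidden-variable model for a single spin 1/2: averaging the value-function
`ω ↦ a₀ + ‖a‖·sgn((p + ω)·a)` over the unit sphere `S² ⊂ ℝ³` (with its surface
measure of total mass `4π`) reproduces the quantum expectation value `a₀ + p·a`. -/
theorem hidden_variable_spin_half
    (a p : EuclideanSpace ℝ (Fin 3)) (ha : a ≠ 0) (a₀ : ℝ) (hp : ‖p‖ ≤ 1) :
    (1 / (4 * Real.pi)) *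
      ∫ ω : sphere (0 : EuclideanSpace ℝ (Fin 3)) 1,
        (a₀ + ‖a‖ * sgn' (dotE (p + (ω : EuclideanSpace ℝ (Fin 3))) a))
        ∂((volume : Measure (EuclideanSpace ℝ (Fin 3))).toSphere)
      = a₀ + dotE p a := by
  have hna : 0 < ‖a‖ := norm_pos_iff.2 ha
  set u := ‖a‖⁻¹ • a
  have hu : ‖u‖ = 1 := by simp [u, norm_smul, hna.ne']
  have hdot : ∀ v, dotE v a = ‖a‖ * inner ℝ v u := by
    intro v
    rw [dotE_eq_inner, real_inner_smul_right, mul_inv_cancel_left₀ hna.ne']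
  have ht : |inner ℝ p u| ≤ 1 := (abs_real_inner_le_norm p u).trans (by rwa [hu, mul_one])
  have hsgn : ∀ ω : sphere (0 : ℝ³) 1,
      sgn' (dotE (p + ω) a) = sgn' (inner ℝ p u + inner ℝ (ω : ℝ³) u) := by
    intro ω
    rw [hdot, inner_add_left, sgn'_mul_of_pos hna]
  have hint : Integrable (fun ω : sphere (0 : ℝ³) 1 ↦ sgn' (inner ℝ p u + inner ℝ (ω : ℝ³) u))
      (volume : Measure ℝ³).toSphere :=
    .of_bound (measurable_sgn'.comp (by fun_prop)).aestronglyMeasurable 1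
      (.of_forall fun _ ↦ abs_sgn'_le_one _)
  simp_rw [hsgn]
  rw [integral_add (integrable_const a₀) (hint.const_mul _), integral_const, integral_const_mul,
    integral_sgn'_add_inner_toSphere ht hu, Measure.toSphere_real_apply_univ, measureReal_def,
    EuclideanSpace.volume_ball_fin_three, hdot]
  simp [ENNReal.toReal_ofReal (by positivity : 0 ≤ π * 4 / 3)]
  field_simp
end

section
/- Let n ≥ 1 and let A, B, C, D be Hermitian n×n complex matrices satisfying A² = B² = C² = D² = I, with A and B each commuting with C and with D. Set K := A·(C + D) + B·(C − D) and [X,Y] := X·Y − Y·X. Then K is Hermitian and K² = 4·I − [A,B]·[C,D]. -/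
/-!
Since `a` and `b` commute with `c ± d`, squaring `K = a (c + d) + b (c - d)` gives
`a² (c + d)² + b² (c - d)² + a b (c + d)(c - d) + b a (c - d)(c + d)`. For involutions
`(c + d)² + (c - d)² = 4` and `(c - d)(c + d) = -(c + d)(c - d) = [c, d]`, which leaves
`4 - [a, b] [c, d]`. Hermiticity holds because products of commuting self-adjoint elements
are self-adjoint.
-/

section Ring

variable {R : Type*} [Ring R]

theorem mul_add_mul_self_of_commute {a b x y : R} (hxa : Commute x a) (hxb : Commute x b)
    (hya : Commute y a) (hyb : Commute y b) :
    (a * x + b * y) * (a * x + b * y) =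
      a * a * (x * x) + a * b * (x * y) + b * a * (y * x) + b * b * (y * y) := by
  simp only [add_mul, mul_add, mul_assoc, hxa.left_comm, hxb.left_comm, hya.left_comm,
    hyb.left_comm]
  abel

theorem add_mul_self_add_sub_mul_self_of_involutive {c d : R} (hc : c * c = 1) (hd : d * d = 1) :
    (c + d) * (c + d) + (c - d) * (c - d) = 4 := by
  calc (c + d) * (c + d) + (c - d) * (c - d) = 2 * (c * c) + 2 * (d * d) := by noncomm_ring
    _ = 4 := by rw [hc, hd]; norm_num

theorem chsh_mul_self {a b c d : R} (ha : a * a = 1) (hb : b * b = 1) (hc : c * c = 1)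
    (hd : d * d = 1) (hac : Commute a c) (had : Commute a d) (hbc : Commute b c)
    (hbd : Commute b d) :
    (a * (c + d) + b * (c - d)) * (a * (c + d) + b * (c - d)) =
      4 - (a * b - b * a) * (c * d - d * c) := by
  have hcd : (c + d) * (c - d) = -(c * d - d * c) := by
    calc (c + d) * (c - d) = c * c - d * d - (c * d - d * c) := by noncomm_ring
      _ = -(c * d - d * c) := by rw [hc, hd, sub_self, zero_sub]
  have hdc : (c - d) * (c + d) = c * d - d * c := by
    calc (c - d) * (c + d) = c * c - d * d + (c * d - d * c) := by noncomm_ring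
      _ = c * d - d * c := by rw [hc, hd, sub_self, zero_add]
  rw [mul_add_mul_self_of_commute (hac.add_right had).symm (hbc.add_right hbd).symm
      (hac.sub_right had).symm (hbc.sub_right hbd).symm, ha, hb, one_mul, one_mul, hcd, hdc,
    ← add_mul_self_add_sub_mul_self_of_involutive hc hd]
  noncomm_ring

end Ring

theorem IsSelfAdjoint.chsh {R : Type*} [Ring R] [StarRing R] {a b c d : R}
    (ha : IsSelfAdjoint a) (hb : IsSelfAdjoint b) (hc : IsSelfAdjoint c) (hd : IsSelfAdjoint d)
    (hac : Commute a c) (had : Commute a d) (hbc : Commute b c) (hbd : Commute b d) :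
    IsSelfAdjoint (a * (c + d) + b * (c - d)) :=
  ((ha.commute_iff (hc.add hd)).mp (hac.add_right had)).add
    ((hb.commute_iff (hc.sub hd)).mp (hbc.sub_right hbd))

theorem chsh_operator_square_general {n : ℕ}
    (A B C D : Matrix (Fin n) (Fin n) ℂ)
    (hA : A.IsHermitian) (hB : B.IsHermitian)
    (hC : C.IsHermitian) (hD : D.IsHermitian)
    (hA2 : A * A = 1) (hB2 : B * B = 1) (hC2 : C * C = 1) (hD2 : D * D = 1)
    (hAC : A * C = C * A) (hAD : A * D = D * A)
    (hBC : B * C = C * B) (hBD : B * D = D * B)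
    (K : Matrix (Fin n) (Fin n) ℂ)
    (hK : K = A * (C + D) + B * (C - D)) :
    K.IsHermitian ∧
      K * K = (4 : ℂ) • (1 : Matrix (Fin n) (Fin n) ℂ)
        - (A * B - B * A) * (C * D - D * C) := by
  subst hK
  refine ⟨IsSelfAdjoint.chsh hA hB hC hD hAC hAD hBC hBD, ?_⟩
  rw [chsh_mul_self hA2 hB2 hC2 hD2 hAC hAD hBC hBD, Algebra.smul_def, mul_one, map_ofNat]

/-- For Hermitian involutions `A, B, C, D` with `A, B` each commuting with `C, D`,
the CHSH operator `K = A(C+D) + B(C−D)` is Hermitian and satisfies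
`K² = 4·I − [A,B]·[C,D]`. -/
theorem chsh_operator_square {n : ℕ} (hn : 1 ≤ n)
    (A B C D : Matrix (Fin n) (Fin n) ℂ)
    (hA : A.IsHermitian) (hB : B.IsHermitian)
    (hC : C.IsHermitian) (hD : D.IsHermitian)
    (hA2 : A * A = 1) (hB2 : B * B = 1) (hC2 : C * C = 1) (hD2 : D * D = 1)
    (hAC : A * C = C * A) (hAD : A * D = D * A)
    (hBC : B * C = C * B) (hBD : B * D = D * B)
    (K : Matrix (Fin n) (Fin n) ℂ)
    (hK : K = A * (C + D) + B * (C - D)) :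
    K.IsHermitian ∧
      K * K = (4 : ℂ) • (1 : Matrix (Fin n) (Fin n) ℂ)
        - (A * B - B * A) * (C * D - D * C) :=
  chsh_operator_square_general A B C D hA hB hC hD hA2 hB2 hC2 hD2 hAC hAD hBC hBD K hK
end

section
/- (Tsirelson inequality.) Let n ≥ 1 and let A, B, C, D be Hermitian n×n complex matrices satisfying A² = B² = C² = D² = I, with A and B each commuting with C and with D. Set K := A·(C + D) + B·(C − D), and let W be a density matrix on ℂ^n (positive semidefinite with trace 1). Then ‖tr(W·K)‖ ≤ 2·√2, where ‖·‖ denotes the complex absolute value. -/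
open Matrix
open scoped ComplexOrder

/-!
With `L := A(C+D) - B(C-D)`, the relations `X² = 1` and the commutations give `K² + L² = 8`,
and `K`, `L` are Hermitian. For a state `W` and `t := tr(W K)`, expanding
`0 ≤ tr(W (K - t)ᴴ (K - t))` gives `|t|² ≤ tr(W K²) = 8 - tr(W L²) ≤ 8`.
-/

section CHSH

variable {R : Type*} [Ring R] {a b c d : R}

theorem mul_mul_self_of_mul_self_eq_one {x p : R} (hx : x * x = 1) (hxp : Commute x p) :
    x * p * (x * p) = p * p := by
  rw [hxp.symm.mul_mul_mul_comm, hx, one_mul]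

theorem chsh_mul_self_add_mul_self (ha : a * a = 1) (hb : b * b = 1) (hc : c * c = 1)
    (hd : d * d = 1) (hac : Commute a c) (had : Commute a d) (hbc : Commute b c)
    (hbd : Commute b d) :
    (a * (c + d) + b * (c - d)) * (a * (c + d) + b * (c - d)) +
      (a * (c + d) - b * (c - d)) * (a * (c + d) - b * (c - d)) = 8 := by
  have hx := mul_mul_self_of_mul_self_eq_one ha (hac.add_right had)
  have hy := mul_mul_self_of_mul_self_eq_one hb (hbc.sub_right hbd)
  calc _ = 2 * (a * (c + d) * (a * (c + d))) + 2 * (b * (c - d) * (b * (c - d))) := by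
        noncomm_ring
    _ = 4 * (c * c) + 4 * (d * d) := by rw [hx, hy]; noncomm_ring
    _ = 8 := by rw [hc, hd]; norm_num

end CHSH

namespace Matrix

variable {n : Type*} [Fintype n] {W : Matrix n n ℂ}

theorem PosSemidef.trace_mul_conjTranspose_mul_self_nonneg (hW : W.PosSemidef)
    (X : Matrix n n ℂ) : 0 ≤ (W * (Xᴴ * X)).trace := by
  rw [← mul_assoc, trace_mul_cycle]
  exact (hW.mul_mul_conjTranspose_same X).trace_nonneg

theorem PosSemidef.norm_trace_mul_sq_le [DecidableEq n] (hW : W.PosSemidef) (htr : W.trace = 1)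
    (K : Matrix n n ℂ) : ((‖(W * K).trace‖ ^ 2 : ℝ) : ℂ) ≤ (W * (Kᴴ * K)).trace := by
  set t := (W * K).trace
  have hWKH : (W * Kᴴ).trace = star t := by
    rw [← hW.isHermitian.eq, ← conjTranspose_mul, trace_conjTranspose, trace_mul_comm]
  have hvar := hW.trace_mul_conjTranspose_mul_self_nonneg (K - t • 1)
  simp only [conjTranspose_sub, conjTranspose_smul, RCLike.star_def, conjTranspose_one, mul_sub,
    sub_mul, Algebra.smul_mul_assoc, one_mul, Algebra.mul_smul_comm, mul_one, trace_sub, trace_smul,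
    smul_eq_mul, hWKH, htr, sub_self, mul_zero, sub_zero, sub_nonneg] at hvar
  rwa [Complex.conj_mul', ← Complex.ofReal_pow] at hvar

end Matrix

theorem tsirelson_bound_general {n : ℕ}
    (A B C D : Matrix (Fin n) (Fin n) ℂ)
    (hA : A.IsHermitian) (hB : B.IsHermitian)
    (hC : C.IsHermitian) (hD : D.IsHermitian)
    (hA2 : A * A = 1) (hB2 : B * B = 1) (hC2 : C * C = 1) (hD2 : D * D = 1)
    (hAC : A * C = C * A) (hAD : A * D = D * A)
    (hBC : B * C = C * B) (hBD : B * D = D * B)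
    (K : Matrix (Fin n) (Fin n) ℂ)
    (hK : K = A * (C + D) + B * (C - D))
    (W : Matrix (Fin n) (Fin n) ℂ)
    (hW : W.PosSemidef) (htr : W.trace = 1) :
    ‖(W * K).trace‖ ≤ 2 * Real.sqrt 2 := by
  set L := A * (C + D) - B * (C - D)
  have hKL : K * K + L * L = 8 :=
    hK ▸ chsh_mul_self_add_mul_self hA2 hB2 hC2 hD2 hAC hAD hBC hBD
  have hAH : (A * (C + D)).IsHermitian :=
    (hA.commute_iff (hC.add hD)).mp (Commute.add_right hAC hAD)
  have hBH : (B * (C - D)).IsHermitian :=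
    (hB.commute_iff (hC.sub hD)).mp (Commute.sub_right hBC hBD)
  have hKH : K.IsHermitian := hK ▸ hAH.add hBH
  have hLH : L.IsHermitian := hAH.sub hBH
  have hsq : ‖(W * K).trace‖ ^ 2 ≤ 8 := by
    have : ((‖(W * K).trace‖ ^ 2 : ℝ) : ℂ) ≤ 8 := calc
      _ ≤ (W * (Kᴴ * K)).trace := hW.norm_trace_mul_sq_le htr K
      _ = 8 - (W * (Lᴴ * L)).trace := by
        rw [hKH.eq, hLH.eq, eq_sub_of_add_eq hKL, mul_sub, trace_sub,
          show W * 8 = 8 • W by noncomm_ring, trace_smul, htr]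
        norm_num
      _ ≤ 8 := sub_le_self _ (hW.trace_mul_conjTranspose_mul_self_nonneg L)
    exact_mod_cast this
  calc ‖(W * K).trace‖ ≤ √8 := Real.le_sqrt_of_sq_le hsq
    _ = 2 * √2 := by
      rw [show (8 : ℝ) = 2 ^ 2 * 2 by norm_num, Real.sqrt_mul' _ zero_le_two,
        Real.sqrt_sq zero_le_two]

/-- The Tsirelson inequality: `|tr(W·K)| ≤ 2√2` for the CHSH operator
`K = A(C+D) + B(C−D)` in any state `W`. -/
theorem tsirelson_bound {n : ℕ} (hn : 1 ≤ n)
    (A B C D : Matrix (Fin n) (Fin n) ℂ)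
    (hA : A.IsHermitian) (hB : B.IsHermitian)
    (hC : C.IsHermitian) (hD : D.IsHermitian)
    (hA2 : A * A = 1) (hB2 : B * B = 1) (hC2 : C * C = 1) (hD2 : D * D = 1)
    (hAC : A * C = C * A) (hAD : A * D = D * A)
    (hBC : B * C = C * B) (hBD : B * D = D * B)
    (K : Matrix (Fin n) (Fin n) ℂ)
    (hK : K = A * (C + D) + B * (C - D))
    (W : Matrix (Fin n) (Fin n) ℂ)
    (hW : W.PosSemidef) (htr : W.trace = 1) :
    ‖(W * K).trace‖ ≤ 2 * Real.sqrt 2 :=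
  tsirelson_bound_general A B C D hA hB hC hD hA2 hB2 hC2 hD2 hAC hAD hBC hBD K hK W hW htr
end

section
/- (Bell–Clauser–Horne–Shimony–Holt inequality.) Let n ≥ 1 and let A, B, C, D be Hermitian n×n complex matrices satisfying A² = B² = C² = D² = I, with A and B each commuting with C and with D. Set K := A·(C + D) + B·(C − D) and [X,Y] := X·Y − Y·X, and let W be a density matrix on ℂ^n (positive semidefinite with trace 1). If Re(tr(W·[A,B]·[C,D])) ≥ 0, then ‖tr(W·K)‖ ≤ 2, where ‖·‖ denotes the complex absolute value. -/
/-!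
Landau's identity: for commuting pairs of involutions, the CHSH operator squares to
`K² = 4 - [A,B][C,D]`. Since `K` is Hermitian, Cauchy–Schwarz for the state `W` gives
`|tr(WK)|² ≤ tr(W) · Re tr(WK²) = 4 - Re tr(W[A,B][C,D]) ≤ 4`.
-/

open Matrix
open scoped ComplexOrder

section CHSH

variable {R : Type*} [Ring R] {a b c d : R}

def chshOperator (a b c d : R) : R := a * (c + d) + b * (c - d)

theorem chshOperator_mul_self
    (ha : a * a = 1) (hb : b * b = 1) (hc : c * c = 1) (hd : d * d = 1)
    (hac : Commute a c) (had : Commute a d) (hbc : Commute b c) (hbd : Commute b d) :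
    chshOperator a b c d * chshOperator a b c d = 4 - (a * b - b * a) * (c * d - d * c) := by
  have swap : ∀ {x y : R}, Commute x y → ∀ z, y * (x * z) = x * (y * z) := fun h z => by
    rw [← mul_assoc, ← h.eq, mul_assoc]
  have cancel : ∀ {x : R}, x * x = 1 → ∀ z, x * (x * z) = z := fun h z => by
    rw [← mul_assoc, h, one_mul]
  simp only [chshOperator, mul_add, add_mul, mul_sub, sub_mul, mul_assoc, swap hac, swap had,
    swap hbc, swap hbd, cancel ha, cancel hb, ha, hb, hc, hd, mul_one]
  rw [show (4 : R) = 1 + 1 + 1 + 1 by norm_num]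
  abel

theorem IsSelfAdjoint.chshOperator [StarRing R]
    (ha : IsSelfAdjoint a) (hb : IsSelfAdjoint b) (hc : IsSelfAdjoint c) (hd : IsSelfAdjoint d)
    (hac : Commute a c) (had : Commute a d) (hbc : Commute b c) (hbd : Commute b d) :
    IsSelfAdjoint (chshOperator a b c d) :=
  ((ha.commute_iff (hc.add hd)).mp (hac.add_right had)).add
    ((hb.commute_iff (hc.sub hd)).mp (hbc.sub_right hbd))

end CHSH

theorem Matrix.PosSemidef.norm_trace_mul_sq_le_s18 {n 𝕜 : Type*} [Fintype n] [DecidableEq n]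
    [RCLike 𝕜] {W : Matrix n n 𝕜} (hW : W.PosSemidef) (X : Matrix n n 𝕜) :
    ‖(W * X).trace‖ ^ 2 ≤ RCLike.re W.trace * RCLike.re (W * (Xᴴ * X)).trace := by
  let := W.toMatrixSeminormedAddCommGroup hW
  let := W.toMatrixInnerProductSpace hW
  -- Cauchy–Schwarz in the semi-inner product `⟪X, Y⟫ = tr(Y W Xᴴ)` induced by `W`.
  have cs := inner_mul_inner_self_le (𝕜 := 𝕜) (1 : Matrix n n 𝕜) X
  change ‖(X * W * 1ᴴ).trace‖ * ‖(1 * W * Xᴴ).trace‖ ≤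
    RCLike.re (1 * W * (1 : Matrix n n 𝕜)ᴴ).trace * RCLike.re (X * W * Xᴴ).trace at cs
  have htr_star : (W * Xᴴ).trace = star (W * X).trace := by
    rw [← trace_conjTranspose, conjTranspose_mul, hW.isHermitian.eq, trace_mul_comm]
  simp only [conjTranspose_one, mul_one, one_mul] at cs
  rwa [htr_star, RCLike.star_def, RCLike.norm_conj, trace_mul_comm X, ← sq, ← trace_mul_cycle,
    mul_assoc] at cs

theorem bell_chsh_inequality_general {n : ℕ}
    (A B C D : Matrix (Fin n) (Fin n) ℂ)
    (hA : A.IsHermitian) (hB : B.IsHermitian)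
    (hC : C.IsHermitian) (hD : D.IsHermitian)
    (hA2 : A * A = 1) (hB2 : B * B = 1) (hC2 : C * C = 1) (hD2 : D * D = 1)
    (hAC : A * C = C * A) (hAD : A * D = D * A)
    (hBC : B * C = C * B) (hBD : B * D = D * B)
    (K : Matrix (Fin n) (Fin n) ℂ)
    (hK : K = A * (C + D) + B * (C - D))
    (W : Matrix (Fin n) (Fin n) ℂ)
    (hW : W.PosSemidef) (htr : W.trace = 1)
    (hpos : 0 ≤ ((W * ((A * B - B * A) * (C * D - D * C))).trace).re) :
    ‖(W * K).trace‖ ≤ 2 := by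
  have hK_sq : K * K = 4 - (A * B - B * A) * (C * D - D * C) := by
    rw [hK]; exact chshOperator_mul_self hA2 hB2 hC2 hD2 hAC hAD hBC hBD
  have hK_herm : Kᴴ = K := by
    rw [hK]; exact IsSelfAdjoint.chshOperator hA hB hC hD hAC hAD hBC hBD
  have htr_four : (W * 4).trace = 4 := by
    rw [← Nat.cast_ofNat (R := Matrix (Fin n) (Fin n) ℂ) (n := 4), ← nsmul_eq_mul', trace_smul,
      htr, nsmul_one, Nat.cast_ofNat]
  have hsq : ‖(W * K).trace‖ ^ 2 ≤ 2 ^ 2 := by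
    have hcs := hW.norm_trace_mul_sq_le_s18 K
    rw [hK_herm, hK_sq, mul_sub, trace_sub, htr, htr_four] at hcs
    norm_num at hcs ⊢
    linarith
  exact (sq_le_sq₀ (norm_nonneg _) zero_le_two).mp hsq

/-- The Bell–Clauser–Horne–Shimony–Holt inequality: if the expectation of the
commutator product `[A,B]·[C,D]` in the state `W` is nonnegative, then
`|tr(W·K)| ≤ 2` for the CHSH operator `K = A(C+D) + B(C−D)`. -/
theorem bell_chsh_inequality {n : ℕ} (hn : 1 ≤ n)
    (A B C D : Matrix (Fin n) (Fin n) ℂ)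
    (hA : A.IsHermitian) (hB : B.IsHermitian)
    (hC : C.IsHermitian) (hD : D.IsHermitian)
    (hA2 : A * A = 1) (hB2 : B * B = 1) (hC2 : C * C = 1) (hD2 : D * D = 1)
    (hAC : A * C = C * A) (hAD : A * D = D * A)
    (hBC : B * C = C * B) (hBD : B * D = D * B)
    (K : Matrix (Fin n) (Fin n) ℂ)
    (hK : K = A * (C + D) + B * (C - D))
    (W : Matrix (Fin n) (Fin n) ℂ)
    (hW : W.PosSemidef) (htr : W.trace = 1)
    (hpos : 0 ≤ ((W * ((A * B - B * A) * (C * D - D * C))).trace).re) :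
    ‖(W * K).trace‖ ≤ 2 :=
  bell_chsh_inequality_general A B C D hA hB hC hD hA2 hB2 hC2 hD2 hAC hAD hBC hBD K hK W hW htr
    hpos
end
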